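/- Let g be the 6-dimensional real nilpotent Lie algebra (0,0,0,12,13,23), i.e. de^1 = de^2 = de^3 = 0, de^4 = e^1∧e^2, de^5 = e^1∧e^3, de^6 = e^2∧e^3. Let J be an almost complex structure on g such that the (0,2)-parts of e^1∧e^2, e^1∧e^3, e^2∧e^3 are linearly independent over ℂ. Then rk N_J = 3, i.e. J is maximally non-integrable. -/
import Mathlib


open Matrix

noncomputable section

/-- Complexification of a real matrix. -/
def cplx {n : ℕ} (A : Matrix (Fin n) (Fin n) ℝ) : Matrix (Fin n) (Fin n) ℂ :=
  A.map Complex.ofReal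

/-- The projector `(1/2)(Id + iJ)` of `V ⊗ ℂ` onto the `-i`-eigenspace `V^{0,1}` of the
complexified almost complex structure `J`. -/
def P01 {n : ℕ} (J : Matrix (Fin n) (Fin n) ℝ) : Matrix (Fin n) (Fin n) ℂ :=
  (2⁻¹ : ℂ) • (1 + Complex.I • cplx J)

/-- The `(0,2)`-part of a complex 2-form `ω` (written as an antisymmetric matrix in the
real basis) with respect to the bigrading induced by `J`: `ω^{0,2}(x,y) = ω(P01 x, P01 y)`. -/
def proj02 {n : ℕ} (J : Matrix (Fin n) (Fin n) ℝ) (ω : Matrix (Fin n) (Fin n) ℂ) :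
    Matrix (Fin n) (Fin n) ℂ :=
  (P01 J)ᵀ * ω * P01 J

/-- The Chevalley–Eilenberg differential on complex 1-forms, determined by its values
`Dd r = d e^r` on the dual basis: `d(Σ α_r e^r) = Σ α_r · (d e^r)`. -/
def dC {n : ℕ} (Dd : Fin n → Matrix (Fin n) (Fin n) ℝ) (α : Fin n → ℂ) :
    Matrix (Fin n) (Fin n) ℂ :=
  ∑ r, α r • cplx (Dd r)

/-- The Chevalley–Eilenberg differential on real 1-forms, as a linear map. -/
def dR {n : ℕ} (Dd : Fin n → Matrix (Fin n) (Fin n) ℝ) :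
    (Fin n → ℝ) →ₗ[ℝ] Matrix (Fin n) (Fin n) ℝ :=
  ∑ r, (LinearMap.proj r : (Fin n → ℝ) →ₗ[ℝ] ℝ).smulRight (Dd r)

/-- The rank of the Nijenhuis tensor of the almost complex structure `J`: the complex
dimension of the image of `μ̄ = π^{0,2} ∘ d` on `(1,0)`-forms.  A complex covector `α` is
of type `(1,0)` iff it annihilates `V^{0,1}`, i.e. `α ∘ P01 = 0`. -/
def nijRank {n : ℕ} (Dd : Fin n → Matrix (Fin n) (Fin n) ℝ)
    (J : Matrix (Fin n) (Fin n) ℝ) : ℕ :=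
  Module.finrank ℂ (Submodule.span ℂ
    {ω : Matrix (Fin n) (Fin n) ℂ |
      ∃ α : Fin n → ℂ, Matrix.vecMul α (P01 J) = 0 ∧ ω = proj02 J (dC Dd α)})

/-- The 2-form `e^a ∧ e^b`, as an antisymmetric matrix. -/
def wR (a b : Fin 6) : Matrix (Fin 6) (Fin 6) ℝ :=
  fun p q => (if p = a ∧ q = b then 1 else 0) - (if p = b ∧ q = a then 1 else 0)

/-- The wedge product of two complex covectors, as an antisymmetric matrix. -/
def wedgeC {n : ℕ} (α β : Fin n → ℂ) : Matrix (Fin n) (Fin n) ℂ :=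
  fun p q => α p * β q - α q * β p


section Aux

variable {n : ℕ}

lemma cplx_mul (A B : Matrix (Fin n) (Fin n) ℝ) : cplx (A * B) = cplx A * cplx B := by
  ext p q
  simp [cplx, Matrix.mul_apply]

lemma cplx_neg_one : cplx (-1 : Matrix (Fin n) (Fin n) ℝ) = -1 := by
  ext p q
  simp [cplx, Matrix.one_apply, apply_ite]

lemma P01_idem (J : Matrix (Fin n) (Fin n) ℝ) (hJ : J * J = -1) :
    P01 J * P01 J = P01 J := by
  have h : cplx J * cplx J = -1 := by rw [← cplx_mul, hJ, cplx_neg_one]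
  have expand : (1 + Complex.I • cplx J) * (1 + Complex.I • cplx J)
      = (2:ℂ) • (1 + Complex.I • cplx J) := by
    rw [mul_add, mul_one, add_mul, one_mul, Matrix.smul_mul, Matrix.mul_smul,
      smul_smul, h, Complex.I_mul_I]
    module
  rw [P01, Matrix.smul_mul, Matrix.mul_smul, expand, smul_smul, smul_smul]
  norm_num

lemma P01_map_conj (J : Matrix (Fin n) (Fin n) ℝ) :
    (P01 J).map (starRingEnd ℂ) = 1 - P01 J := by
  ext p q
  simp only [P01, cplx, Matrix.smul_apply, Matrix.add_apply, Matrix.one_apply, Matrix.map_apply,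
    Matrix.sub_apply]
  split <;>
  · simp only [smul_eq_mul, _root_.map_mul, map_add, map_inv₀, _root_.map_one, map_ofNat,
      map_div₀, Complex.conj_ofReal, Complex.conj_I, map_zero, mul_zero, _root_.map_one]
    ring

lemma cplx_zero : cplx (0 : Matrix (Fin 6) (Fin 6) ℝ) = 0 := by
  ext p q; simp [cplx]

lemma proj02_wR (J : Matrix (Fin 6) (Fin 6) ℝ) (a b : Fin 6) :
    proj02 J (cplx (wR a b)) = wedgeC (P01 J a) (P01 J b) := by
  ext p q
  simp only [proj02, wedgeC, Matrix.mul_apply, Matrix.transpose_apply, cplx, Matrix.map_apply,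
    wR, Complex.ofReal_sub, apply_ite Complex.ofReal, Complex.ofReal_one, Complex.ofReal_zero,
    mul_sub, sub_mul, mul_ite, ite_mul, mul_one, one_mul, mul_zero, zero_mul, ite_and,
    Finset.sum_sub_distrib, Finset.sum_ite_eq, Finset.sum_ite_eq', Finset.mem_univ, if_true,
    Finset.sum_mul, Finset.mul_sum]
  ring

open ComplexOrder in
lemma rank_P01 (J : Matrix (Fin 6) (Fin 6) ℝ) (hJ : J * J = -1) : (P01 J).rank = 3 := by
  set P := P01 J with hP
  set Q := 1 - P with hQdef
  have hPQ : P * Q = 0 := by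
    rw [hQdef, mul_sub, mul_one, P01_idem J hJ, sub_self]
  have hQT : Qᵀ = Pᴴ := by
    rw [hQdef, ← P01_map_conj J, Matrix.conjTranspose, Matrix.transpose_map]
    rfl
  have hrankQ : Q.rank = P.rank := by
    rw [← Matrix.rank_transpose Q, hQT, Matrix.rank_conjTranspose]
  have hle : P.rank + Q.rank ≤ 6 := by
    simpa using Matrix.rank_add_rank_le_card_of_mul_eq_zero hPQ
  have hge : 6 ≤ P.rank + Q.rank := by
    have htop : (⊤ : Submodule ℂ (Fin 6 → ℂ)) ≤
        LinearMap.range P.mulVecLin ⊔ LinearMap.range Q.mulVecLin := by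
      intro x _
      have : x = P.mulVec x + Q.mulVec x := by
        rw [← Matrix.add_mulVec]
        simp [hQdef]
      rw [this]
      exact Submodule.add_mem_sup (LinearMap.mem_range_self _ x) (LinearMap.mem_range_self _ x)
    have h1 : Module.finrank ℂ (⊤ : Submodule ℂ (Fin 6 → ℂ)) ≤
        Module.finrank ℂ ↥(LinearMap.range P.mulVecLin ⊔ LinearMap.range Q.mulVecLin) :=
      Submodule.finrank_mono htop
    have h2 := Submodule.finrank_add_le_finrank_add_finrank
      (LinearMap.range P.mulVecLin) (LinearMap.range Q.mulVecLin)
    have h3 : Module.finrank ℂ (⊤ : Submodule ℂ (Fin 6 → ℂ)) = 6 := by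
      simp [Module.finrank_pi]
    rw [h3] at h1
    exact h1.trans h2
  omega

lemma pi_surj (J : Matrix (Fin 6) (Fin 6) ℝ) (hJ : J * J = -1)
    (hrows : LinearIndependent ℂ ![P01 J 0, P01 J 1, P01 J 2]) (b : Fin 3 → ℂ) :
    ∃ α : Fin 6 → ℂ, Matrix.vecMul α (P01 J) = 0 ∧ α 3 = b 0 ∧ α 4 = b 1 ∧ α 5 = b 2 := by
  classical
  set P := P01 J with hP
  set K : Submodule ℂ (Fin 6 → ℂ) := LinearMap.ker (Pᵀ).mulVecLin with hK
  have hmemK : ∀ α : Fin 6 → ℂ, α ∈ K ↔ Matrix.vecMul α P = 0 := by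
    intro α
    rw [hK, LinearMap.mem_ker, Matrix.mulVecLin_apply, Matrix.mulVec_transpose]
  have hfinK : Module.finrank ℂ K = 3 := by
    have h1 := LinearMap.finrank_range_add_finrank_ker (Pᵀ).mulVecLin
    have h2 : Module.finrank ℂ (LinearMap.range (Pᵀ).mulVecLin) = 3 := by
      have : (Pᵀ).rank = 3 := by rw [Matrix.rank_transpose, hP, rank_P01 J hJ]
      exact this
    have h3 : Module.finrank ℂ (Fin 6 → ℂ) = 6 := by simp
    rw [h2, h3] at h1
    rw [hK]
    omega
  set π : (Fin 6 → ℂ) →ₗ[ℂ] (Fin 3 → ℂ) :=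
    LinearMap.funLeft ℂ ℂ (![3, 4, 5] : Fin 3 → Fin 6) with hπ
  set ρ : K →ₗ[ℂ] (Fin 3 → ℂ) := π.comp K.subtype with hρ
  have hinj : Function.Injective ρ := by
    rw [← LinearMap.ker_eq_bot]
    rw [LinearMap.ker_eq_bot']
    rintro ⟨α, hα⟩ h0
    have hα' : Matrix.vecMul α P = 0 := (hmemK α).mp hα
    have h3 : α 3 = 0 := congrFun h0 0
    have h4 : α 4 = 0 := congrFun h0 1
    have h5 : α 5 = 0 := congrFun h0 2
    have hq : ∀ q, α 0 * P 0 q + α 1 * P 1 q + α 2 * P 2 q = 0 := by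
      intro q
      have := congrFun hα' q
      simp only [Matrix.vecMul, dotProduct, Fin.sum_univ_six, h3, h4, h5, zero_mul,
        add_zero, Pi.zero_apply] at this
      exact this
    have hall := Fintype.linearIndependent_iff.mp hrows ![α 0, α 1, α 2] (by
      funext q
      simpa [Fin.sum_univ_three] using hq q)
    have e0 : α 0 = 0 := hall 0
    have e1 : α 1 = 0 := hall 1
    have e2 : α 2 = 0 := hall 2
    ext i
    fin_cases i <;> assumption
  have hρtop : LinearMap.range ρ = ⊤ := by
    apply Submodule.eq_top_of_finrank_eq
    rw [LinearMap.finrank_range_of_inj hinj, hfinK]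
    simp
  obtain ⟨⟨α, hα⟩, hb⟩ := LinearMap.range_eq_top.mp hρtop b
  refine ⟨α, (hmemK α).mp hα, ?_, ?_, ?_⟩
  · exact congrFun hb 0
  · exact congrFun hb 1
  · exact congrFun hb 2

lemma rows_indep (J : Matrix (Fin 6) (Fin 6) ℝ)
    (hind : LinearIndependent ℂ
      ![proj02 J (cplx (wR 0 1)), proj02 J (cplx (wR 0 2)), proj02 J (cplx (wR 1 2))]) :
    LinearIndependent ℂ ![P01 J 0, P01 J 1, P01 J 2] := by
  rw [proj02_wR, proj02_wR, proj02_wR] at hind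
  have hind' := Fintype.linearIndependent_iff.mp hind
  rw [Fintype.linearIndependent_iff]
  intro g hg
  have hgq : ∀ q, g 0 * P01 J 0 q + g 1 * P01 J 1 q + g 2 * P01 J 2 q = 0 := by
    intro q
    have := congrFun hg q
    simpa [Fin.sum_univ_three] using this
  have h12 := hind' ![g 1, g 2, 0] (by
    ext p q
    simp only [Fin.sum_univ_three, Matrix.cons_val_zero, Matrix.cons_val_one, Matrix.head_cons,
      Matrix.cons_val_two, Matrix.head_fin_const, Matrix.tail_cons, Matrix.add_apply,
      Matrix.smul_apply, wedgeC, smul_eq_mul, Matrix.zero_apply, zero_smul, add_zero]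
    linear_combination (P01 J 0 p) * hgq q - (P01 J 0 q) * hgq p)
  have h01 := hind' ![0, g 0, g 1] (by
    ext p q
    simp only [Fin.sum_univ_three, Matrix.cons_val_zero, Matrix.cons_val_one, Matrix.head_cons,
      Matrix.cons_val_two, Matrix.head_fin_const, Matrix.tail_cons, Matrix.add_apply,
      Matrix.smul_apply, wedgeC, smul_eq_mul, Matrix.zero_apply, zero_smul, zero_add]
    linear_combination (P01 J 2 q) * hgq p - (P01 J 2 p) * hgq q)
  intro i
  fin_cases i
  · simpa using h01 1
  · simpa using h12 0
  · simpa using h12 1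

lemma dC_eq (J : Matrix (Fin 6) (Fin 6) ℝ) (α : Fin 6 → ℂ) :
    proj02 J (dC ![0, 0, 0, wR 0 1, wR 0 2, wR 1 2] α)
      = α 3 • proj02 J (cplx (wR 0 1)) + α 4 • proj02 J (cplx (wR 0 2))
        + α 5 • proj02 J (cplx (wR 1 2)) := by
  have h : dC ![0, 0, 0, wR 0 1, wR 0 2, wR 1 2] α
      = α 3 • cplx (wR 0 1) + α 4 • cplx (wR 0 2) + α 5 • cplx (wR 1 2) := by
    simp [dC, Fin.sum_univ_six, cplx_zero,
      show (![0, 0, 0, wR 0 1, wR 0 2, wR 1 2] 3) = wR 0 1 from rfl,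
      show (![0, 0, 0, wR 0 1, wR 0 2, wR 1 2] 4) = wR 0 2 from rfl,
      show (![0, 0, 0, wR 0 1, wR 0 2, wR 1 2] 5) = wR 1 2 from rfl,
      show (![(0:Matrix (Fin 6) (Fin 6) ℝ), 0, 0, wR 0 1, wR 0 2, wR 1 2] 0) = 0 from rfl,
      show (![(0:Matrix (Fin 6) (Fin 6) ℝ), 0, 0, wR 0 1, wR 0 2, wR 1 2] 1) = 0 from rfl,
      show (![(0:Matrix (Fin 6) (Fin 6) ℝ), 0, 0, wR 0 1, wR 0 2, wR 1 2] 2) = 0 from rfl]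
  rw [h]
  simp only [proj02, Matrix.mul_add, Matrix.add_mul, Matrix.mul_smul, Matrix.smul_mul]

end Aux

/-- On the nilpotent Lie algebra `(0,0,0,12,13,23)` (i.e. `de⁴ = e¹∧e²`, `de⁵ = e¹∧e³`,
`de⁶ = e²∧e³`), if `J` is an almost complex structure for which the `(0,2)`-parts of
`e¹∧e²`, `e¹∧e³`, `e²∧e³` are linearly independent over `ℂ`, then `rk N_J = 3`,
i.e. `J` is maximally non-integrable. -/
theorem rank_three_of_independent_parts
    (J : Matrix (Fin 6) (Fin 6) ℝ) (hJ : J * J = -1)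
    (hind : LinearIndependent ℂ
      ![proj02 J (cplx (wR 0 1)), proj02 J (cplx (wR 0 2)), proj02 J (cplx (wR 1 2))]) :
    nijRank ![0, 0, 0, wR 0 1, wR 0 2, wR 1 2] J = 3 := by
  classical
  have hrows := rows_indep J hind
  unfold nijRank
  have hspan : Submodule.span ℂ
      {ω : Matrix (Fin 6) (Fin 6) ℂ |
        ∃ α : Fin 6 → ℂ, Matrix.vecMul α (P01 J) = 0
          ∧ ω = proj02 J (dC ![0, 0, 0, wR 0 1, wR 0 2, wR 1 2] α)}
      = Submodule.span ℂ (Set.range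
        ![proj02 J (cplx (wR 0 1)), proj02 J (cplx (wR 0 2)), proj02 J (cplx (wR 1 2))]) := by
    apply le_antisymm
    · rw [Submodule.span_le]
      rintro ω ⟨α, hα, rfl⟩
      rw [dC_eq]
      refine Submodule.add_mem _ (Submodule.add_mem _ ?_ ?_) ?_
      · exact Submodule.smul_mem _ _ (Submodule.subset_span ⟨0, by simp⟩)
      · exact Submodule.smul_mem _ _ (Submodule.subset_span ⟨1, by simp⟩)
      · exact Submodule.smul_mem _ _ (Submodule.subset_span ⟨2, by simp⟩)
    · rw [Submodule.span_le]
      rintro ω ⟨i, rfl⟩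
      apply Submodule.subset_span
      fin_cases i
      · obtain ⟨α, h0, h3, h4, h5⟩ := pi_surj J hJ hrows ![1, 0, 0]
        refine ⟨α, h0, ?_⟩
        rw [dC_eq]
        simp at h3 h4 h5
        simp [h3, h4, h5]
      · obtain ⟨α, h0, h3, h4, h5⟩ := pi_surj J hJ hrows ![0, 1, 0]
        refine ⟨α, h0, ?_⟩
        rw [dC_eq]
        simp at h3 h4 h5
        simp [h3, h4, h5]
      · obtain ⟨α, h0, h3, h4, h5⟩ := pi_surj J hJ hrows ![0, 0, 1]
        refine ⟨α, h0, ?_⟩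
        rw [dC_eq]
        simp at h3 h4 h5
        simp [h3, h4, h5]
  rw [hspan, finrank_span_eq_card hind]
  simp
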